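/- Let C ∈ ℝ^{s×n}, P = I - C†C, and Q = A^T J A be symmetric positive definite. Then P(I - (PQP)†QP) = 0. -/

import Mathlib

open Matrix

/-- `Cd` is the Moore–Penrose inverse of `C` (the four Penrose equations). -/
def IsMoorePenrose {m n : Type*} [Fintype m] [Fintype n]
    (C : Matrix m n ℝ) (Cd : Matrix n m ℝ) : Prop :=
  C * Cd * C = C ∧ Cd * C * Cd = Cd ∧ (C * Cd)ᵀ = C * Cd ∧ (Cd * C)ᵀ = Cd * C

/-- The signature matrix `J = diag(I_p, -I_q)`. -/
def sig (p q : ℕ) : Matrix (Fin p ⊕ Fin q) (Fin p ⊕ Fin q) ℝ :=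
  Matrix.fromBlocks 1 0 0 (-1)

/-!
With `M = PQP`, the Penrose equations force `M†P = M† = PM†`, so
`P(I - M†QP) = P - M†M =: B`. Then `PB = B` and `MB = 0`, whence `BᵀQB = BᵀMB = 0`, and
positive definiteness of `Q` gives `B = 0`.
-/

theorem Matrix.PosDef.eq_zero_of_conjTranspose_mul_mul_eq_zero {m n R : Type*} [Fintype n]
    [Fintype m] [CommRing R] [PartialOrder R] [StarRing R]
    {Q : Matrix n n R} {B : Matrix n m R} (hQ : Q.PosDef) (h : Bᴴ * Q * B = 0) : B = 0 := by
  refine ext_iff_mulVec.2 fun v => ?_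
  rw [zero_mulVec]
  by_contra hv
  have hpos := hQ.dotProduct_mulVec_pos hv
  rw [star_mulVec, dotProduct_mulVec, vecMul_vecMul, ← dotProduct_mulVec, mulVec_mulVec,
    h, zero_mulVec, dotProduct_zero] at hpos
  exact lt_irrefl 0 hpos

namespace IsMoorePenrose

variable {m n : Type*} [Fintype m] [Fintype n] {C : Matrix m n ℝ} {X : Matrix n m ℝ}

theorem eq_transpose_mul_transpose_mul (h : IsMoorePenrose C X) : X = Cᵀ * Xᵀ * X := by
  obtain ⟨-, hXCX, -, hXC⟩ := h
  conv_lhs => rw [← hXCX, ← hXC]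
  rw [transpose_mul]

theorem eq_mul_transpose_mul_transpose (h : IsMoorePenrose C X) : X = X * Xᵀ * Cᵀ := by
  obtain ⟨-, hXCX, hCX, -⟩ := h
  conv_lhs => rw [← hXCX, Matrix.mul_assoc, ← hCX]
  rw [transpose_mul, Matrix.mul_assoc]

theorem mul_transpose_eq_of_mul_eq (h : IsMoorePenrose C X) {P : Matrix m m ℝ}
    (hP : P * C = C) : X * Pᵀ = X := by
  rw [h.eq_mul_transpose_mul_transpose, Matrix.mul_assoc, ← transpose_mul, hP]

theorem transpose_mul_eq_of_mul_eq (h : IsMoorePenrose C X) {P : Matrix n n ℝ}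
    (hP : C * P = C) : Pᵀ * X = X := by
  rw [h.eq_transpose_mul_transpose_mul, ← Matrix.mul_assoc, ← Matrix.mul_assoc,
    ← transpose_mul, hP]

theorem isIdempotentElem_one_sub_mul [DecidableEq n] (h : IsMoorePenrose C X) :
    IsIdempotentElem (1 - X * C) := by
  refine IsIdempotentElem.one_sub ?_
  rw [IsIdempotentElem, ← Matrix.mul_assoc, h.2.1]

theorem transpose_one_sub_mul [DecidableEq n] (h : IsMoorePenrose C X) :
    (1 - X * C)ᵀ = 1 - X * C := by
  rw [transpose_sub, transpose_one, h.2.2.2]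

end IsMoorePenrose

theorem mul_one_sub_pinv_mul_mul_eq_zero {n : Type*} [Fintype n] [DecidableEq n]
    {P Q Md : Matrix n n ℝ}
    (hP : IsIdempotentElem P) (hPt : Pᵀ = P) (hQ : Q.PosDef)
    (hMd : IsMoorePenrose (P * Q * P) Md) : P * (1 - Md * Q * P) = 0 := by
  set M := P * Q * P with hM
  have hPM : P * M = M := by rw [hM, ← Matrix.mul_assoc, ← Matrix.mul_assoc, hP.eq]
  have hMP : M * P = M := by rw [hM, Matrix.mul_assoc, hP.eq]
  have hMdP : Md * P = Md := hPt ▸ hMd.mul_transpose_eq_of_mul_eq hPM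
  have hPMd : P * Md = Md := hPt ▸ hMd.transpose_mul_eq_of_mul_eq hMP
  have hB : P * (1 - Md * Q * P) = P - Md * M := by
    rw [mul_sub, mul_one, ← Matrix.mul_assoc, ← Matrix.mul_assoc, hPMd]
    conv_lhs => rw [← hMdP]
    simp only [hM, Matrix.mul_assoc]
  rw [hB]
  set B := P - Md * M
  have hPB : P * B = B := by rw [mul_sub, hP.eq, ← Matrix.mul_assoc, hPMd]
  have hMB : M * B = 0 := by rw [mul_sub, hMP, ← Matrix.mul_assoc, hMd.1, sub_self]
  have hBQB : Bᴴ * Q * B = 0 := by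
    calc Bᴴ * Q * B = (P * B)ᵀ * Q * (P * B) := by
          rw [hPB, conjTranspose_eq_transpose_of_trivial]
      _ = Bᵀ * (M * B) := by simp only [transpose_mul, hPt, hM, Matrix.mul_assoc]
      _ = 0 := by rw [hMB, Matrix.mul_zero]
  exact hQ.eq_zero_of_conjTranspose_mul_mul_eq_zero hBQB

/-- With `P = I - C†C`, `Q = AᵀJA` positive definite, `P(I - (PQP)†QP) = 0`. -/
theorem P_mul_one_sub_pinvQP {p q s n : ℕ}
    (A : Matrix (Fin p ⊕ Fin q) (Fin n) ℝ)
    (C : Matrix (Fin s) (Fin n) ℝ) (Cd : Matrix (Fin n) (Fin s) ℝ)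
    (hC : IsMoorePenrose C Cd)
    (hQ : (Aᵀ * sig p q * A).PosDef)
    (Md : Matrix (Fin n) (Fin n) ℝ)
    (hMd : IsMoorePenrose
      ((1 - Cd * C) * (Aᵀ * sig p q * A) * (1 - Cd * C)) Md) :
    (1 - Cd * C) * (1 - Md * (Aᵀ * sig p q * A) * (1 - Cd * C)) = 0 :=
  mul_one_sub_pinv_mul_mul_eq_zero hC.isIdempotentElem_one_sub_mul hC.transpose_one_sub_mul
    hQ hMd
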